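/- arXiv:1907.04004 — 2 statements merged into one kernel-verified Lean document; each statement's English description precedes it below -/
import Mathlib

section
/- In the simplified infinite-time-horizon setting, suppose δ > 0 and E[(Y^{0̄})²] > 0 where 0̄ = (0,…,0); let C'_T = b_u²/E[(Y^{0̄})²], let c be any real number with c ≥ 1/(1 − (1 − p)^T·(E[Y^{0̄}])²/E[(Y^{0̄})²]), and set ζ'(T; p) = 1 + c·(E[Y^{0̄}])²/((1/(1 − p))^T·E[(Y^{0̄})²]). Then Var(ψ̂_cipw(0̄)) > 0 and the relative efficiency of the incremental estimator to the never-treated IPW estimator satisfies Var(ψ̂_inc)/Var(ψ̂_cipw(0̄)) ≤ C'_T·ζ'(T; p)·((δ²p(1 − p) + (1 − p)²)/(δp + 1 − p)²)^T. -/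
open MeasureTheory ProbabilityTheory

noncomputable section

/-- Codomain of the joint family `(A₁, …, A_T, U)`: index `some t` carries the binary
treatment `A_t` (valued in `Bool`) and index `none` carries the exogenous variable `U`. -/
def Cod (E : Type) (T : ℕ) : Option (Fin T) → Type
  | none => E
  | some _ => Bool

instance CodMeas (E : Type) [MeasurableSpace E] (T : ℕ) : ∀ i, MeasurableSpace (Cod E T i)
  | none => inferInstanceAs (MeasurableSpace E)
  | some _ => inferInstanceAs (MeasurableSpace Bool)

/-- The joint family `(A₁, …, A_T, U)` bundled as a single dependently-typed family of random
variables, used to state that `(A₁, …, A_T, U)` is mutually independent. -/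
def fam {Ω : Type*} {E : Type} (T : ℕ) (A : Fin T → Ω → Bool) (U : Ω → E) :
    (i : Option (Fin T)) → Ω → Cod E T i
  | none => U
  | some t => A t

/-! The never-treated weights vanish unless `A = 0̄`, so
`ψ̂_cipw(0̄) = (1-p)^{-T} 1{A = 0̄} Y^{0̄}`, and independence of `A` and `U` gives
`Var ψ̂_cipw(0̄) = E[(Y^{0̄})²]/(1-p)^T - (E Y^{0̄})²`, positive as `(E Y^{0̄})² ≤ E[(Y^{0̄})²]`
and `(1-p)^T < 1`. The incremental estimator is bounded crudely:
`Var ψ̂_inc ≤ E ψ̂_inc² ≤ b_u² (E w(A_1)²)^T` with `E w(A_1)² = (δ²p + 1 - p)/(δp + 1 - p)²`.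
With `r = (1-p)^T (E Y^{0̄})²/E[(Y^{0̄})²] < 1`, the hypothesis `c ≥ 1/(1 - r)` gives
`(1 + c r)(1 - r) ≥ 1`, which is exactly what bounding the ratio of the two variances requires. -/

theorem sq_integral_le_integral_sq {Ω : Type*} [MeasurableSpace Ω] {μ : Measure Ω}
    [IsProbabilityMeasure μ] {X : Ω → ℝ} (hX : MemLp X 2 μ) :
    (∫ ω, X ω ∂μ) ^ 2 ≤ ∫ ω, X ω ^ 2 ∂μ := by
  have h := variance_nonneg X μ
  rw [variance_eq_sub hX] at h
  simpa [sub_nonneg] using h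

theorem integral_comp_bool {Ω : Type*} [MeasurableSpace Ω] {P : Measure Ω}
    [IsProbabilityMeasure P] {B : Ω → Bool} (hB : Measurable B) {p : ℝ} (hp : 0 ≤ p)
    (hBp : P {ω | B ω = true} = ENNReal.ofReal p) (g : Bool → ℝ) :
    ∫ ω, g (B ω) ∂P = g true * p + g false * (1 - p) := by
  have htrue : (P.map B).real {true} = p := by
    rw [map_measureReal_apply hB (measurableSet_singleton _)]
    simp [measureReal_def, Set.preimage, hBp, hp]
  have hfalse : (P.map B).real {false} = 1 - p := by
    have := Measure.isProbabilityMeasure_map (μ := P) hB.aemeasurable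
    rw [← htrue, ← probReal_compl_eq_one_sub (measurableSet_singleton _)]
    congr 1; ext b; simp
  rw [← integral_map hB.aemeasurable (measurable_of_countable g).aestronglyMeasurable,
    integral_fintype .of_finite]
  simp [htrue, hfalse, mul_comm]

theorem abs_prod_comp_le_pow (g : Bool → ℝ) {ι : Type*} [Fintype ι] (v : ι → Bool) :
    |∏ i, g (v i)| ≤ (|g true| + |g false|) ^ Fintype.card ι := by
  rw [Finset.abs_prod, ← Finset.card_univ, ← Finset.prod_const]
  refine Finset.prod_le_prod (fun i _ => abs_nonneg _) fun i _ => ?_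
  cases v i <;> simp

theorem prod_comp_mul_eq_mul_const_false {ι : Type*} [Fintype ι] {g : Bool → ℝ}
    (hg : g true = 0) (F : (ι → Bool) → ℝ) (v : ι → Bool) :
    (∏ i, g (v i)) * F v = (∏ i, g (v i)) * F (fun _ => false) := by
  by_cases hv : ∃ i, v i = true
  · obtain ⟨i, hi⟩ := hv
    rw [Finset.prod_eq_zero (Finset.mem_univ i) (by rw [hi, hg]), zero_mul, zero_mul]
  · simp only [not_exists, Bool.not_eq_true] at hv
    rw [show v = fun _ => false from funext hv]

section Treatments

variable {Ω : Type*} {E : Type} [MeasurableSpace Ω] [MeasurableSpace E] {P : Measure Ω}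
  {T : ℕ} {A : Fin T → Ω → Bool} {U : Ω → E}

theorem integral_mul_prod_comp_fam
    (hAmeas : ∀ t, Measurable (A t)) (hUmeas : Measurable U)
    (hindep : iIndepFun (m := fun i => CodMeas E T i) (fam T A U) P)
    (g : Bool → ℝ) {h : E → ℝ} (hh : Measurable h) :
    ∫ ω, h (U ω) * ∏ t, g (A t ω) ∂P = (∫ ω, h (U ω) ∂P) * ∏ t, ∫ ω, g (A t ω) ∂P := by
  let F : (i : Option (Fin T)) → Cod E T i → ℝ
    | none => h
    | some _ => g
  have hmeas : ∀ i, AEMeasurable (fam T A U i) P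
    | none => hUmeas.aemeasurable
    | some t => (hAmeas t).aemeasurable
  have hF : ∀ i, AEStronglyMeasurable (F i) (P.map (fam T A U i))
    | none => hh.aestronglyMeasurable
    | some _ => (measurable_of_countable g).aestronglyMeasurable
  simpa [Fintype.prod_option, F, fam] using hindep.integral_fun_prod_comp hmeas hF

variable [IsProbabilityMeasure P] {p : ℝ}

theorem integral_mul_prod_comp
    (hAmeas : ∀ t, Measurable (A t)) (hUmeas : Measurable U)
    (hindep : iIndepFun (m := fun i => CodMeas E T i) (fam T A U) P)
    (hp : 0 ≤ p) (hAp : ∀ t, P {ω | A t ω = true} = ENNReal.ofReal p)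
    (g : Bool → ℝ) {h : E → ℝ} (hh : Measurable h) :
    ∫ ω, h (U ω) * ∏ t, g (A t ω) ∂P
      = (∫ ω, h (U ω) ∂P) * (g true * p + g false * (1 - p)) ^ T := by
  simp [integral_mul_prod_comp_fam hAmeas hUmeas hindep g hh,
    integral_comp_bool (hAmeas _) hp (hAp _)]

theorem memLp_prod_comp_mul (hAmeas : ∀ t, Measurable (A t)) (g : Bool → ℝ) {Y : Ω → ℝ}
    (hY : AEStronglyMeasurable Y P) {b : ℝ} (hYb : ∀ ω, |Y ω| ≤ b) (q : ENNReal) :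
    MemLp (fun ω => (∏ t, g (A t ω)) * Y ω) q P := by
  have hweight : AEStronglyMeasurable (fun ω => ∏ t, g (A t ω)) P :=
    Finset.aestronglyMeasurable_fun_prod _ fun t _ =>
      ((measurable_of_countable g).comp (hAmeas t)).aestronglyMeasurable
  refine .of_bound (hweight.mul hY) ((|g true| + |g false|) ^ T * b) (.of_forall fun ω => ?_)
  rw [Real.norm_eq_abs, abs_mul]
  simpa using mul_le_mul (abs_prod_comp_le_pow g (A · ω)) (hYb ω) (abs_nonneg _) (by positivity)

variable {f : (Fin T → Bool) → E → ℝ} {bu : ℝ}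

theorem variance_prod_comp_mul_le
    (hAmeas : ∀ t, Measurable (A t)) (hUmeas : Measurable U)
    (hindep : iIndepFun (m := fun i => CodMeas E T i) (fam T A U) P)
    (hp : 0 ≤ p) (hAp : ∀ t, P {ω | A t ω = true} = ENNReal.ofReal p)
    (hf : Measurable (fun q : (Fin T → Bool) × E => f q.1 q.2)) (hfbd : ∀ a e, |f a e| ≤ bu)
    (g : Bool → ℝ) :
    variance (fun ω => (∏ t, g (A t ω)) * f (fun s => A s ω) (U ω)) P
      ≤ bu ^ 2 * (g true ^ 2 * p + g false ^ 2 * (1 - p)) ^ T := by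
  have hY : Measurable fun ω => f (fun s => A s ω) (U ω) :=
    hf.comp ((measurable_pi_lambda _ hAmeas).prodMk hUmeas)
  have hdom : Integrable (fun ω => (∏ t, g (A t ω) ^ 2) * bu ^ 2) P :=
    memLp_one_iff_integrable.mp <|
      memLp_prod_comp_mul hAmeas (g · ^ 2) aestronglyMeasurable_const (fun _ => le_rfl) 1
  have hsq : ∀ ω, ((∏ t, g (A t ω)) * f (fun s => A s ω) (U ω)) ^ 2
      ≤ (∏ t, g (A t ω) ^ 2) * bu ^ 2 := fun ω => by
    rw [mul_pow, Finset.prod_pow]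
    exact mul_le_mul_of_nonneg_left (sq_le_sq' (abs_le.mp (hfbd _ _)).1 (abs_le.mp (hfbd _ _)).2)
      (by positivity)
  calc variance (fun ω => (∏ t, g (A t ω)) * f (fun s => A s ω) (U ω)) P
      ≤ ∫ ω, ((∏ t, g (A t ω)) * f (fun s => A s ω) (U ω)) ^ 2 ∂P :=
        variance_le_expectation_sq (((Finset.measurable_prod _ fun t _ =>
          (measurable_of_countable g).comp (hAmeas t)).mul hY).aestronglyMeasurable)
    _ ≤ ∫ ω, (∏ t, g (A t ω) ^ 2) * bu ^ 2 ∂P :=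
        integral_mono_of_nonneg (.of_forall fun _ => sq_nonneg _) hdom (.of_forall hsq)
    _ = bu ^ 2 * (g true ^ 2 * p + g false ^ 2 * (1 - p)) ^ T := by
        have hprod : ∫ ω, ∏ t, g (A t ω) ^ 2 ∂P
            = (g true ^ 2 * p + g false ^ 2 * (1 - p)) ^ T := by
          simpa using integral_mul_prod_comp hAmeas hUmeas hindep hp hAp (g · ^ 2)
            (h := fun _ => 1) measurable_const
        rw [integral_mul_const, hprod, mul_comm]

theorem variance_prod_comp_mul_of_apply_true_eq_zero
    (hAmeas : ∀ t, Measurable (A t)) (hUmeas : Measurable U)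
    (hindep : iIndepFun (m := fun i => CodMeas E T i) (fam T A U) P)
    (hp : 0 ≤ p) (hAp : ∀ t, P {ω | A t ω = true} = ENNReal.ofReal p)
    (hf : Measurable (fun q : (Fin T → Bool) × E => f q.1 q.2)) (hfbd : ∀ a e, |f a e| ≤ bu)
    {g : Bool → ℝ} (hg : g true = 0) :
    variance (fun ω => (∏ t, g (A t ω)) * f (fun s => A s ω) (U ω)) P
      = (g false ^ 2 * (1 - p)) ^ T * ∫ ω, f (fun _ => false) (U ω) ^ 2 ∂P
        - ((g false * (1 - p)) ^ T * ∫ ω, f (fun _ => false) (U ω) ∂P) ^ 2 := by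
  have hZ : Measurable fun e => f (fun _ => false) e :=
    hf.comp (measurable_const.prodMk measurable_id)
  have hW : (fun ω => (∏ t, g (A t ω)) * f (fun s => A s ω) (U ω))
      = fun ω => (∏ t, g (A t ω)) * f (fun _ => false) (U ω) :=
    funext fun ω => prod_comp_mul_eq_mul_const_false hg (f · (U ω)) (A · ω)
  have hZU : Measurable fun ω => f (fun _ => false) (U ω) := hZ.comp hUmeas
  have hmean : ∫ ω, (∏ t, g (A t ω)) * f (fun _ => false) (U ω) ∂P
      = (g false * (1 - p)) ^ T * ∫ ω, f (fun _ => false) (U ω) ∂P := by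
    simpa [hg, mul_comm] using integral_mul_prod_comp hAmeas hUmeas hindep hp hAp g hZ
  have hsecond : ∫ ω, ((∏ t, g (A t ω)) * f (fun _ => false) (U ω)) ^ 2 ∂P
      = (g false ^ 2 * (1 - p)) ^ T * ∫ ω, f (fun _ => false) (U ω) ^ 2 ∂P := by
    calc _ = ∫ ω, f (fun _ => false) (U ω) ^ 2 * ∏ t, g (A t ω) ^ 2 ∂P := by
          congr 1; funext ω; rw [mul_pow, Finset.prod_pow, mul_comm]
      _ = _ := by
          rw [integral_mul_prod_comp hAmeas hUmeas hindep hp hAp (g · ^ 2) (hZ.pow_const 2)]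
          simp [hg, mul_comm]
  rw [hW, variance_eq_sub (memLp_prod_comp_mul hAmeas g hZU.aestronglyMeasurable
    (fun ω => hfbd _ (U ω)) 2), ← hmean, ← hsecond]
  rfl

end Treatments

theorem sub_pos_and_div_le_of_one_div_one_sub_le {s m μ c V b K : ℝ} (hs0 : 0 < s) (hs1 : s < 1)
    (hm : 0 < m) (hμ : μ ^ 2 ≤ m) (hK : 0 ≤ K) (hV : V ≤ b ^ 2 * K)
    (hc : 1 / (1 - s * μ ^ 2 / m) ≤ c) :
    0 < 1 / s * m - μ ^ 2
      ∧ V / (1 / s * m - μ ^ 2) ≤ b ^ 2 / m * (1 + c * μ ^ 2 / (1 / s * m)) * (s * K) := by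
  set r := s * μ ^ 2 / m with hr
  have hr0 : 0 ≤ r := by positivity
  have hr1 : r < 1 := by
    rw [hr, div_lt_one hm]
    nlinarith
  have hden : 1 / s * m - μ ^ 2 = m * (1 - r) / s := by
    rw [hr]; field_simp
  have hden_pos : 0 < 1 / s * m - μ ^ 2 := by
    rw [hden]; exact div_pos (mul_pos hm (by linarith)) hs0
  refine ⟨hden_pos, (div_le_iff₀ hden_pos).mpr ?_⟩
  have hcr : 1 ≤ c * (1 - r) := by
    rwa [div_le_iff₀ (by linarith)] at hc
  -- `(1 + c r)(1 - r) = (1 - r) + r · c (1 - r) ≥ (1 - r) + r = 1`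
  have hkey : 1 ≤ (1 + c * r) * (1 - r) := by nlinarith
  have hrhs : b ^ 2 / m * (1 + c * μ ^ 2 / (1 / s * m)) * (s * K) * (1 / s * m - μ ^ 2)
      = b ^ 2 * K * ((1 + c * r) * (1 - r)) := by
    rw [hr]; field_simp
  rw [hrhs]
  nlinarith [mul_le_mul_of_nonneg_left hkey (by positivity : 0 ≤ b ^ 2 * K)]

theorem relative_efficiency_upper_bound_never_treated_general
    {Ω : Type*} {E : Type} [MeasurableSpace Ω] [MeasurableSpace E]
    (P : Measure Ω) [IsProbabilityMeasure P]
    (T : ℕ) (hT : 1 ≤ T)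
    (p : ℝ) (hp : p ∈ Set.Ioo (0:ℝ) 1)
    (A : Fin T → Ω → Bool) (U : Ω → E)
    (hAmeas : ∀ t, Measurable (A t)) (hUmeas : Measurable U)
    (hindep : iIndepFun (m := fun i => CodMeas E T i) (fam T A U) P)
    (hAp : ∀ t, P {ω | A t ω = true} = ENNReal.ofReal p)
    (f : (Fin T → Bool) → E → ℝ)
    (hf : Measurable (fun q : (Fin T → Bool) × E => f q.1 q.2))
    (bu : ℝ) (hfbd : ∀ a e, |f a e| ≤ bu)
    (δ : ℝ)
    (hY2 : 0 < ∫ ω, (f (fun _ => false) (U ω)) ^ 2 ∂P)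
    (c : ℝ)
    (hc : 1 / (1 - (1 - p) ^ T * (∫ ω, f (fun _ => false) (U ω) ∂P) ^ 2
        / (∫ ω, (f (fun _ => false) (U ω)) ^ 2 ∂P)) ≤ c) :
    0 < variance (fun ω =>
        (∏ t, (if A t ω then (0:ℝ) else 1) / (1 - p)) * f (fun s => A s ω) (U ω)) P
    ∧ variance (fun ω =>
          (∏ t, (if A t ω then δ else 1) / (δ * p + 1 - p)) * f (fun s => A s ω) (U ω)) P
        / variance (fun ω =>
            (∏ t, (if A t ω then (0:ℝ) else 1) / (1 - p)) * f (fun s => A s ω) (U ω)) P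
      ≤ (bu ^ 2 / ∫ ω, (f (fun _ => false) (U ω)) ^ 2 ∂P)
        * (1 + c * (∫ ω, f (fun _ => false) (U ω) ∂P) ^ 2
            / ((1 / (1 - p)) ^ T * ∫ ω, (f (fun _ => false) (U ω)) ^ 2 ∂P))
        * ((δ ^ 2 * p * (1 - p) + (1 - p) ^ 2) / (δ * p + 1 - p) ^ 2) ^ T := by
  obtain ⟨hp0, hp1⟩ := hp
  have hq : 0 < 1 - p := sub_pos.mpr hp1
  have hV0 := variance_prod_comp_mul_of_apply_true_eq_zero hAmeas hUmeas hindep hp0.le hAp hf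
    hfbd (g := fun b => (if b then 0 else 1) / (1 - p)) (by simp)
  have hV1 := variance_prod_comp_mul_le hAmeas hUmeas hindep hp0.le hAp hf hfbd
    (fun b => (if b then δ else 1) / (δ * p + 1 - p))
  have hZ : MemLp (fun ω => f (fun _ => false) (U ω)) 2 P :=
    .of_bound (hf.comp (measurable_const.prodMk hUmeas)).aestronglyMeasurable bu
      (.of_forall fun ω => hfbd _ (U ω))
  simp only [if_true, if_false, Bool.false_eq_true] at hV0 hV1
  rw [show 1 / (1 - p) * (1 - p) = 1 by field_simp, one_pow, one_mul,
    show (1 / (1 - p)) ^ 2 * (1 - p) = 1 / (1 - p) by field_simp, one_div_pow] at hV0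
  rw [hV0, one_div_pow, show ((δ ^ 2 * p * (1 - p) + (1 - p) ^ 2) / (δ * p + 1 - p) ^ 2) ^ T
      = (1 - p) ^ T * ((δ / (δ * p + 1 - p)) ^ 2 * p + (1 / (δ * p + 1 - p)) ^ 2 * (1 - p)) ^ T by
    rw [← mul_pow]; generalize δ * p + 1 - p = D; ring]
  exact sub_pos_and_div_le_of_one_div_one_sub_le (pow_pos hq T) (pow_lt_one₀ hq.le (by linarith)
    (by omega)) hY2 (sq_integral_le_integral_sq hZ) (by positivity) hV1 hc

/-- Upper bound on the relative efficiency of the incremental-effect estimator to the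
never-treated IPW estimator: with `C'_T = b_u²/E[(Y^{0̄})²]`,
`c ≥ 1/(1 − (1−p)^T(E[Y^{0̄}])²/E[(Y^{0̄})²])` and
`ζ'(T;p) = 1 + c·(E[Y^{0̄}])²/((1/(1−p))^T·E[(Y^{0̄})²])`, we have `Var(ψ̂_cipw(0̄)) > 0` and
`Var(ψ̂_inc)/Var(ψ̂_cipw(0̄)) ≤ C'_T·ζ'(T;p)·((δ²p(1−p) + (1−p)²)/(δp+1−p)²)^T`. -/
theorem relative_efficiency_upper_bound_never_treated
    {Ω : Type*} {E : Type} [MeasurableSpace Ω] [MeasurableSpace E]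
    (P : Measure Ω) [IsProbabilityMeasure P]
    (T : ℕ) (hT : 1 ≤ T)
    (p : ℝ) (hp : p ∈ Set.Ioo (0:ℝ) 1)
    (A : Fin T → Ω → Bool) (U : Ω → E)
    (hAmeas : ∀ t, Measurable (A t)) (hUmeas : Measurable U)
    (hindep : iIndepFun (m := fun i => CodMeas E T i) (fam T A U) P)
    (hAp : ∀ t, P {ω | A t ω = true} = ENNReal.ofReal p)
    (f : (Fin T → Bool) → E → ℝ)
    (hf : Measurable (fun q : (Fin T → Bool) × E => f q.1 q.2))
    (bu : ℝ) (hbu : 0 < bu) (hfbd : ∀ a e, |f a e| ≤ bu)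
    (δ : ℝ) (hδ : 0 < δ)
    (hY2 : 0 < ∫ ω, (f (fun _ => false) (U ω)) ^ 2 ∂P)
    (c : ℝ)
    (hc : 1 / (1 - (1 - p) ^ T * (∫ ω, f (fun _ => false) (U ω) ∂P) ^ 2
        / (∫ ω, (f (fun _ => false) (U ω)) ^ 2 ∂P)) ≤ c) :
    0 < variance (fun ω =>
        (∏ t, (if A t ω then (0:ℝ) else 1) / (1 - p)) * f (fun s => A s ω) (U ω)) P
    ∧ variance (fun ω =>
          (∏ t, (if A t ω then δ else 1) / (δ * p + 1 - p)) * f (fun s => A s ω) (U ω)) P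
        / variance (fun ω =>
            (∏ t, (if A t ω then (0:ℝ) else 1) / (1 - p)) * f (fun s => A s ω) (U ω)) P
      ≤ (bu ^ 2 / ∫ ω, (f (fun _ => false) (U ω)) ^ 2 ∂P)
        * (1 + c * (∫ ω, f (fun _ => false) (U ω) ∂P) ^ 2
            / ((1 / (1 - p)) ^ T * ∫ ω, (f (fun _ => false) (U ω)) ^ 2 ∂P))
        * ((δ ^ 2 * p * (1 - p) + (1 - p) ^ 2) / (δ * p + 1 - p) ^ 2) ^ T :=
  relative_efficiency_upper_bound_never_treated_general P T hT p hp A U hAmeas hUmeas hindep hAp f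
    hf bu hfbd δ hY2 c hc
end
end

section
/- In the simplified infinite-time-horizon setting, suppose δ > 1 and E[(Y^{1̄})²] > 0, and set c₁ = E[(Y^{1̄})²]/b_u². If T satisfies ((δ²p + 1 − p)/(δp + 1 − p)²)^T − c₁/p^T + 2 < 0, then Var(ψ̂_inc) < Var(ψ̂_at). Moreover, for any fixed δ > 1, p ∈ (0,1) and c₁ > 0, since (δ²p + 1 − p)/(δp + 1 − p)² < 1/p, there exists a finite integer T_min such that this numeric inequality (and hence the variance comparison, in any such model with that value of c₁) holds for every T > T_min. -/
/-!
By independence of `(A₁, …, A_T, U)`, any `(∏ₜ φ(A_t)) · h(U)` has expectation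
`(p φ(1) + (1 - p) φ(0))^T · E[h(U)]`. The always-treated weight vanishes unless `A = 1̄`, so
`ψ̂_at = (∏ₜ A_t / p) · Y^{1̄}` and `Var ψ̂_at = E[(Y^{1̄})²] / p^T - (E Y^{1̄})²`, which is at
least `c₁ b_u² / p^T - b_u²`. Bounding `Y²` by `b_u²` instead gives
`Var ψ̂_inc ≤ E[ψ̂_inc²] ≤ r^T b_u²`, where `r = (δ²p + 1 - p) / (δp + 1 - p)²` is the second
moment of one incremental weight; the hypothesis on `T` separates the two bounds. Finally
`(δp + 1 - p)² - p (δ²p + 1 - p) = (1 - p)(2δp + 1 - 2p) > 0` gives `r < 1/p`, so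
`(r^T + 2) p^T → 0` and eventually drops below `c₁`.
-/

open MeasureTheory ProbabilityTheory

noncomputable section

theorem integral_bool_comp {Ω : Type*} [MeasurableSpace Ω] {P : Measure Ω}
    [IsProbabilityMeasure P] {X : Ω → Bool} {p : ℝ} (hX : Measurable X) (hp : 0 ≤ p)
    (hXp : P {ω | X ω = true} = ENNReal.ofReal p) (φ : Bool → ℝ) :
    ∫ ω, φ (X ω) ∂P = p * φ true + (1 - p) * φ false := by
  have htrue : (P.map X).real {true} = p := by
    rw [map_measureReal_apply hX (measurableSet_singleton _), measureReal_def]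
    simpa [Set.preimage, hp] using congrArg ENNReal.toReal hXp
  have hfalse : (P.map X).real {false} = 1 - p := by
    have := Measure.isProbabilityMeasure_map (μ := P) hX.aemeasurable
    rw [← htrue, ← probReal_compl_eq_one_sub (measurableSet_singleton _)]
    congr 1
    ext b
    simp
  rw [← integral_map hX.aemeasurable (measurable_of_finite φ).aestronglyMeasurable,
    integral_fintype .of_finite, Fintype.sum_bool, htrue, hfalse, smul_eq_mul, smul_eq_mul]

theorem abs_prod_bool_comp_le {ι : Type*} [Fintype ι] (φ : Bool → ℝ) (b : ι → Bool) :
    |∏ i, φ (b i)| ≤ max |φ true| |φ false| ^ Fintype.card ι := by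
  rw [Finset.abs_prod, ← Finset.card_univ, ← Finset.prod_const]
  exact Finset.prod_le_prod (fun _ _ => abs_nonneg _) fun i _ => by cases b i <;> simp

def Cod.elim {E : Type} {T : ℕ} (φ : Bool → ℝ) (g : E → ℝ) :
    (i : Option (Fin T)) → Cod E T i → ℝ
  | none => g
  | some _ => φ

/-- `ψ̂_inc` and `ψ̂_at` are the cases `φ b = (if b then δ else 1) / (δ p + 1 - p)` and
`φ b = (if b then 1 else 0) / p`. -/
def weightedOutcome {Ω : Type*} {E : Type} {T : ℕ} (φ : Bool → ℝ)
    (A : Fin T → Ω → Bool) (U : Ω → E) (f : (Fin T → Bool) → E → ℝ) (ω : Ω) :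
    ℝ :=
  (∏ t, φ (A t ω)) * f (fun s => A s ω) (U ω)

theorem weightedOutcome_eq_of_map_false {Ω : Type*} {E : Type} {T : ℕ}
    {A : Fin T → Ω → Bool} {U : Ω → E} {f : (Fin T → Bool) → E → ℝ} {φ : Bool → ℝ}
    (hφ : φ false = 0) :
    weightedOutcome φ A U f = fun ω => (∏ t, φ (A t ω)) * f (fun _ => true) (U ω) := by
  funext ω
  by_cases hall : ∀ t, A t ω = true
  · rw [weightedOutcome, show (fun s => A s ω) = fun _ => true from funext hall]
  · obtain ⟨t, ht⟩ := not_forall.1 hall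
    have hzero : ∏ t, φ (A t ω) = 0 :=
      Finset.prod_eq_zero (Finset.mem_univ t) (by simpa [ht] using hφ)
    rw [weightedOutcome, hzero, zero_mul, zero_mul]

section Design

variable {Ω : Type*} {E : Type} [MeasurableSpace Ω] [MeasurableSpace E]
  {P : Measure Ω} {T : ℕ} {p : ℝ} {A : Fin T → Ω → Bool} {U : Ω → E}

theorem integral_prod_comp_mul_comp [IsProbabilityMeasure P] (hp : 0 ≤ p)
    (hA : ∀ t, Measurable (A t)) (hU : Measurable U)
    (hindep : iIndepFun (m := fun i => CodMeas E T i) (fam T A U) P)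
    (hAp : ∀ t, P {ω | A t ω = true} = ENNReal.ofReal p) (φ : Bool → ℝ) {g : E → ℝ}
    (hg : Measurable g) :
    ∫ ω, (∏ t, φ (A t ω)) * g (U ω) ∂P
      = (p * φ true + (1 - p) * φ false) ^ T * ∫ ω, g (U ω) ∂P := by
  have hfam : ∀ i, AEMeasurable (fam T A U i) P
    | none => hU.aemeasurable
    | some t => (hA t).aemeasurable
  have helim : ∀ i, AEStronglyMeasurable (Cod.elim φ g i) (P.map (fam T A U i))
    | none => hg.aestronglyMeasurable
    | some _ => (measurable_of_finite φ).aestronglyMeasurable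
  calc ∫ ω, (∏ t, φ (A t ω)) * g (U ω) ∂P
      = ∫ ω, ∏ i, Cod.elim φ g i (fam T A U i ω) ∂P := by
        simp only [Fintype.prod_option, mul_comm]
        rfl
    _ = ∏ i, ∫ ω, Cod.elim φ g i (fam T A U i ω) ∂P :=
        hindep.integral_fun_prod_comp hfam helim
    _ = (∫ ω, g (U ω) ∂P) * ∏ t, ∫ ω, φ (A t ω) ∂P := Fintype.prod_option _
    _ = _ := by
        simp only [integral_bool_comp (hA _) hp (hAp _), Finset.prod_const, Finset.card_univ,
          Fintype.card_fin, mul_comm]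

variable {f : (Fin T → Bool) → E → ℝ} {bu : ℝ}

theorem measurable_weightedOutcome (hA : ∀ t, Measurable (A t)) (hU : Measurable U)
    (hf : Measurable fun q : (Fin T → Bool) × E => f q.1 q.2) (φ : Bool → ℝ) :
    Measurable (weightedOutcome φ A U f) :=
  (Finset.measurable_prod _ fun t _ => (measurable_of_finite φ).comp (hA t)).mul
    (hf.comp ((measurable_pi_lambda _ hA).prodMk hU))

theorem memLp_top_weightedOutcome (hA : ∀ t, Measurable (A t)) (hU : Measurable U)
    (hf : Measurable fun q : (Fin T → Bool) × E => f q.1 q.2) (hfbd : ∀ a e, |f a e| ≤ bu)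
    (φ : Bool → ℝ) : MemLp (weightedOutcome φ A U f) ⊤ P := by
  refine memLp_top_of_bound (measurable_weightedOutcome hA hU hf φ).aestronglyMeasurable
    (max |φ true| |φ false| ^ T * bu) (ae_of_all _ fun ω => ?_)
  rw [Real.norm_eq_abs, weightedOutcome, abs_mul]
  simpa using mul_le_mul (abs_prod_bool_comp_le φ (A · ω)) (hfbd _ _) (abs_nonneg _)
    (pow_nonneg (le_max_of_le_left (abs_nonneg _)) _)

theorem variance_weightedOutcome_le [IsProbabilityMeasure P] (hp : 0 ≤ p)
    (hA : ∀ t, Measurable (A t)) (hU : Measurable U)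
    (hindep : iIndepFun (m := fun i => CodMeas E T i) (fam T A U) P)
    (hAp : ∀ t, P {ω | A t ω = true} = ENNReal.ofReal p)
    (hf : Measurable fun q : (Fin T → Bool) × E => f q.1 q.2) (hfbd : ∀ a e, |f a e| ≤ bu)
    (φ : Bool → ℝ) :
    Var[weightedOutcome φ A U f; P]
      ≤ (p * φ true ^ 2 + (1 - p) * φ false ^ 2) ^ T * bu ^ 2 := by
  have hdom : Integrable (weightedOutcome (φ · ^ 2) A U fun _ _ => bu ^ 2) P :=
    (memLp_top_weightedOutcome hA hU measurable_const
      (fun _ _ => (abs_of_nonneg (sq_nonneg bu)).le) _).integrable le_top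
  calc Var[weightedOutcome φ A U f; P]
      ≤ ∫ ω, weightedOutcome φ A U f ω ^ 2 ∂P :=
        variance_le_expectation_sq (measurable_weightedOutcome hA hU hf φ).aestronglyMeasurable
    _ ≤ ∫ ω, (∏ t, φ (A t ω) ^ 2) * bu ^ 2 ∂P := by
        refine integral_mono_of_nonneg (ae_of_all _ fun ω => sq_nonneg _) hdom
          (ae_of_all _ fun ω => ?_)
        simp only [weightedOutcome, mul_pow, Finset.prod_pow]
        exact mul_le_mul_of_nonneg_left (sq_le_sq.2 ((hfbd _ _).trans (le_abs_self bu)))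
          (sq_nonneg _)
    _ = _ := by
        rw [integral_prod_comp_mul_comp hp hA hU hindep hAp (φ · ^ 2) measurable_const]
        simp

theorem variance_weightedOutcome_of_map_false [IsProbabilityMeasure P] (hp : 0 ≤ p)
    (hA : ∀ t, Measurable (A t)) (hU : Measurable U)
    (hindep : iIndepFun (m := fun i => CodMeas E T i) (fam T A U) P)
    (hAp : ∀ t, P {ω | A t ω = true} = ENNReal.ofReal p)
    (hf : Measurable fun q : (Fin T → Bool) × E => f q.1 q.2) (hfbd : ∀ a e, |f a e| ≤ bu)
    {φ : Bool → ℝ} (hφ : φ false = 0) :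
    Var[weightedOutcome φ A U f; P]
      = (p * φ true ^ 2) ^ T * ∫ ω, f (fun _ => true) (U ω) ^ 2 ∂P
        - ((p * φ true) ^ T * ∫ ω, f (fun _ => true) (U ω) ∂P) ^ 2 := by
  have hf1 : Measurable (f fun _ => true) := hf.comp (measurable_const.prodMk measurable_id)
  rw [variance_eq_sub ((memLp_top_weightedOutcome hA hU hf hfbd φ).mono_exponent le_top),
    weightedOutcome_eq_of_map_false hφ]
  simp only [Pi.pow_apply, mul_pow, ← Finset.prod_pow]
  rw [integral_prod_comp_mul_comp hp hA hU hindep hAp (φ · ^ 2) (hf1.pow_const 2),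
    integral_prod_comp_mul_comp hp hA hU hindep hAp φ hf1]
  simp only [hφ, ne_eq, OfNat.ofNat_ne_zero, not_false_eq_true, zero_pow, mul_zero, add_zero]
  ring

theorem variance_incremental_le [IsProbabilityMeasure P] (hp : 0 ≤ p)
    (hA : ∀ t, Measurable (A t)) (hU : Measurable U)
    (hindep : iIndepFun (m := fun i => CodMeas E T i) (fam T A U) P)
    (hAp : ∀ t, P {ω | A t ω = true} = ENNReal.ofReal p)
    (hf : Measurable fun q : (Fin T → Bool) × E => f q.1 q.2) (hfbd : ∀ a e, |f a e| ≤ bu)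
    (δ : ℝ) :
    Var[fun ω => (∏ t, (if A t ω then δ else 1) / (δ * p + 1 - p)) * f (fun s => A s ω) (U ω);
        P]
      ≤ ((δ ^ 2 * p + (1 - p)) / (δ * p + 1 - p) ^ 2) ^ T * bu ^ 2 := by
  have h := variance_weightedOutcome_le hp hA hU hindep hAp hf hfbd
    fun b => (if b then δ else 1) / (δ * p + 1 - p)
  have hconst : p * (δ / (δ * p + 1 - p)) ^ 2 + (1 - p) * (1 / (δ * p + 1 - p)) ^ 2
      = (δ ^ 2 * p + (1 - p)) / (δ * p + 1 - p) ^ 2 := by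
    rw [div_pow, div_pow]
    ring
  rwa [if_pos rfl, if_neg Bool.false_ne_true, hconst] at h

theorem variance_alwaysTreated_eq [IsProbabilityMeasure P] (hp : 0 < p)
    (hA : ∀ t, Measurable (A t)) (hU : Measurable U)
    (hindep : iIndepFun (m := fun i => CodMeas E T i) (fam T A U) P)
    (hAp : ∀ t, P {ω | A t ω = true} = ENNReal.ofReal p)
    (hf : Measurable fun q : (Fin T → Bool) × E => f q.1 q.2) (hfbd : ∀ a e, |f a e| ≤ bu) :
    Var[fun ω => (∏ t, (if A t ω then (1 : ℝ) else 0) / p) * f (fun s => A s ω) (U ω); P]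
      = (1 / p) ^ T * ∫ ω, f (fun _ => true) (U ω) ^ 2 ∂P
        - (∫ ω, f (fun _ => true) (U ω) ∂P) ^ 2 := by
  have h := variance_weightedOutcome_of_map_false hp.le hA hU hindep hAp hf hfbd
    (φ := fun b => (if b then 1 else 0) / p) (by simp)
  have hweights : p * (1 / p) ^ 2 = 1 / p ∧ p * (1 / p) = 1 := by
    constructor <;> field_simp
  rwa [if_pos rfl, hweights.1, hweights.2, one_pow, one_mul] at h

end Design

theorem incremental_ratio_lt_inv {p δ : ℝ} (hp0 : 0 < p) (hp1 : p < 1) (hδ : 1 ≤ δ) :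
    (δ ^ 2 * p + (1 - p)) / (δ * p + 1 - p) ^ 2 < 1 / p := by
  have hd : 0 < δ * p + 1 - p := by nlinarith
  rw [div_lt_div_iff₀ (by positivity) hp0]
  nlinarith [mul_pos (sub_pos.2 hp1) (show 0 < 2 * δ * p + 1 - 2 * p by nlinarith)]

theorem eventually_pow_sub_div_pow_add_two_neg {r p c : ℝ} (hr : 0 ≤ r) (hp0 : 0 < p)
    (hp1 : p < 1) (hrp : r < 1 / p) (hc : 0 < c) :
    ∀ᶠ n : ℕ in Filter.atTop, r ^ n - c / p ^ n + 2 < 0 := by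
  have hlim : Filter.Tendsto (fun n : ℕ => (r * p) ^ n + 2 * p ^ n) Filter.atTop (nhds 0) := by
    simpa using (tendsto_pow_atTop_nhds_zero_of_lt_one (by positivity)
      ((lt_div_iff₀ hp0).1 hrp)).add
      ((tendsto_pow_atTop_nhds_zero_of_lt_one hp0.le hp1).const_mul 2)
  filter_upwards [hlim.eventually_lt_const hc] with n hn
  have hpn : 0 < p ^ n := pow_pos hp0 n
  rw [show r ^ n - c / p ^ n + 2 = ((r * p) ^ n + 2 * p ^ n - c) / p ^ n by
    field_simp
    ring]
  exact div_neg_of_neg_of_pos (by linarith) hpn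

theorem variance_comparison_Tmin_general
    {Ω : Type*} {E : Type} [MeasurableSpace Ω] [MeasurableSpace E]
    (P : Measure Ω) [IsProbabilityMeasure P]
    (T : ℕ)
    (p : ℝ) (hp : p ∈ Set.Ioo (0:ℝ) 1)
    (A : Fin T → Ω → Bool) (U : Ω → E)
    (hAmeas : ∀ t, Measurable (A t)) (hUmeas : Measurable U)
    (hindep : iIndepFun (m := fun i => CodMeas E T i) (fam T A U) P)
    (hAp : ∀ t, P {ω | A t ω = true} = ENNReal.ofReal p)
    (f : (Fin T → Bool) → E → ℝ)
    (hf : Measurable (fun q : (Fin T → Bool) × E => f q.1 q.2))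
    (bu : ℝ) (hbu : 0 < bu) (hfbd : ∀ a e, |f a e| ≤ bu)
    (δ : ℝ) (hδ : 1 < δ) :
    (((δ ^ 2 * p + (1 - p)) / (δ * p + 1 - p) ^ 2) ^ T
        - ((∫ ω, (f (fun _ => true) (U ω)) ^ 2 ∂P) / bu ^ 2) / p ^ T + 2 < 0 →
      variance (fun ω =>
          (∏ t, (if A t ω then δ else 1) / (δ * p + 1 - p)) * f (fun s => A s ω) (U ω)) P
        < variance (fun ω =>
            (∏ t, (if A t ω then (1:ℝ) else 0) / p) * f (fun s => A s ω) (U ω)) P)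
    ∧ (δ ^ 2 * p + (1 - p)) / (δ * p + 1 - p) ^ 2 < 1 / p
    ∧ ∀ c₁ : ℝ, 0 < c₁ → ∃ Tmin : ℕ, ∀ T' : ℕ, Tmin < T' →
        ((δ ^ 2 * p + (1 - p)) / (δ * p + 1 - p) ^ 2) ^ T' - c₁ / p ^ T' + 2 < 0 := by
  obtain ⟨hp0, hp1⟩ := hp
  set r := (δ ^ 2 * p + (1 - p)) / (δ * p + 1 - p) ^ 2
  have hr0 : 0 ≤ r := div_nonneg (by nlinarith) (sq_nonneg _)
  have hr_lt : r < 1 / p := incremental_ratio_lt_inv hp0 hp1 hδ.le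
  refine ⟨fun hT => ?_, hr_lt, fun c₁ hc₁ => ?_⟩
  · set I := ∫ ω, f (fun _ => true) (U ω) ^ 2 ∂P
    have hmean : |∫ ω, f (fun _ => true) (U ω) ∂P| ≤ bu := by
      simpa using norm_integral_le_of_norm_le_const (μ := P)
        (f := fun ω => f (fun _ => true) (U ω)) (ae_of_all _ fun ω => hfbd _ (U ω))
    have hscaled : I / bu ^ 2 / p ^ T * bu ^ 2 = (1 / p) ^ T * I := by
      rw [one_div_pow]
      field_simp
    rw [variance_alwaysTreated_eq hp0 hAmeas hUmeas hindep hAp hf hfbd]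
    nlinarith [variance_incremental_le hp0.le hAmeas hUmeas hindep hAp hf hfbd δ,
      mul_lt_mul_of_pos_right hT (pow_pos hbu 2), sq_le_sq.2 (hmean.trans (le_abs_self bu))]
  · obtain ⟨N, hN⟩ :=
      (eventually_pow_sub_div_pow_add_two_neg hr0 hp0 hp1 hr_lt hc₁).exists_forall_of_atTop
    exact ⟨N, fun T' hT' => hN T' hT'.le⟩

/-- Minimum number of timepoints for the incremental estimator to dominate the always-treated
IPW estimator: with `c₁ = E[(Y^{1̄})²]/b_u²`, if
`((δ²p + 1 − p)/(δp + 1 − p)²)^T − c₁/p^T + 2 < 0` then `Var(ψ̂_inc) < Var(ψ̂_at)`.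
Moreover `(δ²p + 1 − p)/(δp + 1 − p)² < 1/p`, so for any `c₁ > 0` there is a finite `T_min`
such that the numeric inequality holds for every `T > T_min`. -/
theorem variance_comparison_Tmin
    {Ω : Type*} {E : Type} [MeasurableSpace Ω] [MeasurableSpace E]
    (P : Measure Ω) [IsProbabilityMeasure P]
    (T : ℕ) (hT : 1 ≤ T)
    (p : ℝ) (hp : p ∈ Set.Ioo (0:ℝ) 1)
    (A : Fin T → Ω → Bool) (U : Ω → E)
    (hAmeas : ∀ t, Measurable (A t)) (hUmeas : Measurable U)
    (hindep : iIndepFun (m := fun i => CodMeas E T i) (fam T A U) P)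
    (hAp : ∀ t, P {ω | A t ω = true} = ENNReal.ofReal p)
    (f : (Fin T → Bool) → E → ℝ)
    (hf : Measurable (fun q : (Fin T → Bool) × E => f q.1 q.2))
    (bu : ℝ) (hbu : 0 < bu) (hfbd : ∀ a e, |f a e| ≤ bu)
    (δ : ℝ) (hδ : 1 < δ)
    (hY2 : 0 < ∫ ω, (f (fun _ => true) (U ω)) ^ 2 ∂P) :
    (((δ ^ 2 * p + (1 - p)) / (δ * p + 1 - p) ^ 2) ^ T
        - ((∫ ω, (f (fun _ => true) (U ω)) ^ 2 ∂P) / bu ^ 2) / p ^ T + 2 < 0 →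
      variance (fun ω =>
          (∏ t, (if A t ω then δ else 1) / (δ * p + 1 - p)) * f (fun s => A s ω) (U ω)) P
        < variance (fun ω =>
            (∏ t, (if A t ω then (1:ℝ) else 0) / p) * f (fun s => A s ω) (U ω)) P)
    ∧ (δ ^ 2 * p + (1 - p)) / (δ * p + 1 - p) ^ 2 < 1 / p
    ∧ ∀ c₁ : ℝ, 0 < c₁ → ∃ Tmin : ℕ, ∀ T' : ℕ, Tmin < T' →
        ((δ ^ 2 * p + (1 - p)) / (δ * p + 1 - p) ^ 2) ^ T' - c₁ / p ^ T' + 2 < 0 :=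
  variance_comparison_Tmin_general P T p hp A U hAmeas hUmeas hindep hAp f hf bu hbu hfbd δ hδ
end
end
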